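/- arXiv:1912.12833 — 6 statements merged into one kernel-verified Lean document; each statement's English description precedes it below -/
import Mathlib

section
/- For d ≤ (1-α)(1-1/q)n with α ∈ (0,1), the ratio ρ_d / (C(n,d) q^{-n} (q-1)^d) is at most (n-d+1)/(n - (q/(q-1))d + 1), where ρ_d = Σ_{i=0}^d C(n,i)(1-1/q)^i q^{i-n}. -/
set_option maxHeartbeats 1000000 in
/-- For `d ≤ (1-α)(1-1/q)n`, the ratio `ρ_d / (C(n,d) q^{-n} (q-1)^d)` is at most
`(n-d+1)/(n - (q/(q-1))d + 1)`. -/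
theorem rho_ratio_upper_bound (q n d : ℕ) (α : ℝ) (hq : 2 ≤ q) (hn : 0 < n)
    (hα0 : 0 < α) (hα1 : α < 1)
    (hd : (d : ℝ) ≤ (1 - α) * (1 - 1 / q) * n) :
    (∑ i ∈ Finset.range (d + 1),
        (n.choose i : ℝ) * (1 - 1 / q) ^ i * (q : ℝ) ^ ((i : ℤ) - (n : ℤ))) /
      ((n.choose d : ℝ) * (q : ℝ) ^ (-(n : ℤ)) * ((q : ℝ) - 1) ^ d) ≤
    ((n : ℝ) - d + 1) / ((n : ℝ) - ((q : ℝ) / ((q : ℝ) - 1)) * d + 1) := by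
  have hR : (2:ℝ) ≤ (q:ℝ) := by exact_mod_cast hq
  have hR0 : (0:ℝ) < (q:ℝ) := by linarith
  have hRne : (q:ℝ) ≠ 0 := ne_of_gt hR0
  have hc : (1:ℝ) ≤ (q:ℝ) - 1 := by linarith
  have hc0 : (0:ℝ) < (q:ℝ) - 1 := by linarith
  -- d < n
  have hfrac : (1 - 1/(q:ℝ)) < 1 := by
    have : 0 < 1/(q:ℝ) := by positivity
    linarith
  have hfrac0 : 0 < (1 - 1/(q:ℝ)) := by
    rw [sub_pos, div_lt_one hR0]; linarith
  have hdn' : (d:ℝ) < n := by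
    have h1 : (1 - α) * (1 - 1 / (q:ℝ)) * n < 1 * 1 * n := by
      have hn' : (0:ℝ) < n := by exact_mod_cast hn
      apply mul_lt_mul_of_pos_right _ hn'
      calc (1-α) * (1 - 1/(q:ℝ)) < 1 * (1 - 1/(q:ℝ)) :=
            mul_lt_mul_of_pos_right (by linarith) hfrac0
        _ ≤ 1 * 1 := by nlinarith
    linarith [hd, h1]
  have hdn : d < n := by exact_mod_cast hdn'
  -- Den > 0
  have hDen : (0:ℝ) < (n:ℝ) - ((q:ℝ)/((q:ℝ)-1)) * d + 1 := by
    have hαn : 0 < α * n := by positivity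
    have h2 : ((q:ℝ)/((q:ℝ)-1)) * d ≤ (1-α) * n := by
      rw [div_mul_eq_mul_div, div_le_iff₀ hc0]
      have : (1 - 1/(q:ℝ)) = ((q:ℝ)-1)/(q:ℝ) := by field_simp
      rw [this] at hd
      have := mul_le_mul_of_nonneg_left hd (le_of_lt hR0)
      calc (q:ℝ) * d ≤ (q:ℝ) * ((1-α) * (((q:ℝ)-1)/(q:ℝ)) * n) := by linarith
        _ = (1-α) * n * ((q:ℝ)-1) := by field_simp
    nlinarith
  set c : ℝ := (q:ℝ) - 1 with hcdef
  set a : ℕ → ℝ := fun i => (n.choose i : ℝ) * c ^ i with hadef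
  have hND : (0:ℝ) < (n:ℝ) - d + 1 := by linarith
  set r : ℝ := (d:ℝ) / (((n:ℝ) - d + 1) * c) with hrdef
  have hr0 : 0 ≤ r := by positivity
  have h1r : 1 - r = ((n:ℝ) - ((q:ℝ)/c) * d + 1) / ((n:ℝ) - d + 1) := by
    rw [hrdef]
    field_simp
    ring
  have h1r0 : 0 < 1 - r := by
    rw [h1r]; positivity
  -- step inequality
  have hstep : ∀ i < d, a i ≤ r * a (i + 1) := by
    intro i hi
    have hin : i < n := lt_trans hi hdn
    have hrec : (n.choose (i+1) : ℝ) * (i+1) = (n.choose i : ℝ) * ((n:ℝ) - i) := by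
      have := Nat.choose_succ_right_eq n i
      have hcast : ((n.choose (i+1) * (i+1) : ℕ) : ℝ) = ((n.choose i * (n - i) : ℕ) : ℝ) := by
        exact_mod_cast congrArg (fun x : ℕ => (x:ℝ)) this
      push_cast [Nat.cast_sub (le_of_lt hin)] at hcast
      linarith
    have hci : (0:ℝ) < c ^ i := by positivity
    have hch0 : (0:ℝ) ≤ (n.choose i : ℝ) := by positivity
    have hch1 : (0:ℝ) ≤ (n.choose (i+1) : ℝ) := by positivity
    have key : (n.choose i : ℝ) * ((n:ℝ) - d + 1) ≤ (d:ℝ) * (n.choose (i+1) : ℝ) := by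
      have h1 : (n.choose i : ℝ) * ((n:ℝ) - d + 1) ≤ (n.choose i : ℝ) * ((n:ℝ) - i) := by
        have hid : (i:ℝ) ≤ (d:ℝ) - 1 := by
          have : (i:ℝ) + 1 ≤ d := by exact_mod_cast hi
          linarith
        nlinarith
      have h2 : (n.choose i : ℝ) * ((n:ℝ) - i) ≤ (d:ℝ) * (n.choose (i+1) : ℝ) := by
        rw [← hrec]
        have : (i:ℝ) + 1 ≤ d := by exact_mod_cast hi
        nlinarith
      linarith
    rw [hadef, hrdef]
    simp only []
    rw [div_mul_eq_mul_div, le_div_iff₀ (by positivity)]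
    have : (n.choose (i+1):ℝ) * c ^ (i+1) = ((n.choose (i+1):ℝ) * c) * c ^ i := by ring
    calc (n.choose i : ℝ) * c ^ i * (((n:ℝ) - d + 1) * c)
        = ((n.choose i : ℝ) * ((n:ℝ) - d + 1)) * (c ^ i * c) := by ring
      _ ≤ ((d:ℝ) * (n.choose (i+1) : ℝ)) * (c ^ i * c) := by
          apply mul_le_mul_of_nonneg_right key (by positivity)
      _ = (d:ℝ) * ((n.choose (i+1):ℝ) * c ^ (i+1)) := by ring
  have had0 : 0 < a d := by
    rw [hadef]
    have : 0 < n.choose d := Nat.choose_pos (le_of_lt hdn)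
    have : (0:ℝ) < (n.choose d : ℝ) := by exact_mod_cast this
    positivity
  -- a i ≤ r^(d-i) * a d
  have hpow : ∀ k i, i + k = d → a i ≤ r ^ k * a d := by
    intro k
    induction k with
    | zero =>
      intro i hik
      rw [Nat.add_zero] at hik
      rw [hik, pow_zero, one_mul]
    | succ m ih =>
      intro i hik
      have hi : i < d := by omega
      calc a i ≤ r * a (i+1) := hstep i hi
        _ ≤ r * (r ^ m * a d) := by
            apply mul_le_mul_of_nonneg_left (ih (i+1) (by omega)) hr0
        _ = r ^ (m+1) * a d := by ring
  have hsum : ∑ i ∈ Finset.range (d+1), a i ≤ (∑ k ∈ Finset.range (d+1), r ^ k) * a d := by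
    calc ∑ i ∈ Finset.range (d+1), a i ≤ ∑ i ∈ Finset.range (d+1), r ^ (d - i) * a d := by
          apply Finset.sum_le_sum
          intro i hi
          simp only [Finset.mem_range] at hi
          exact hpow (d - i) i (by omega)
      _ = ∑ k ∈ Finset.range (d+1), r ^ k * a d := by
          rw [← Finset.sum_range_reflect (fun k => r ^ k * a d) (d+1)]
          apply Finset.sum_congr rfl
          intro i hi
          simp only [Finset.mem_range] at hi
          have h' : d + 1 - 1 - i = d - i := by omega
          rw [h']
      _ = (∑ k ∈ Finset.range (d+1), r ^ k) * a d := by rw [Finset.sum_mul]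
  -- geometric bound: (∑ r^k) * (1 - r) ≤ 1
  have hgeom : (∑ k ∈ Finset.range (d+1), r ^ k) * (1 - r) ≤ 1 := by
    have := geom_sum_mul r (d+1)
    have hpw : 0 ≤ r ^ (d+1) := by positivity
    nlinarith
  -- rewrite LHS
  have hterm : ∀ i ∈ Finset.range (d+1),
      (n.choose i : ℝ) * (1 - 1 / q) ^ i * (q : ℝ) ^ ((i : ℤ) - (n : ℤ))
        = a i * (q:ℝ) ^ (-(n:ℤ)) := by
    intro i _
    rw [hadef]
    have h1 : (q:ℝ) ^ ((i:ℤ) - (n:ℤ)) = (q:ℝ) ^ (i:ℤ) * (q:ℝ) ^ (-(n:ℤ)) := by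
      rw [← zpow_add₀ hRne]; ring_nf
    have h2 : (q:ℝ) ^ (i:ℤ) = (q:ℝ) ^ i := zpow_natCast _ _
    have h3 : (1 - 1/(q:ℝ)) ^ i * (q:ℝ) ^ i = c ^ i := by
      rw [← mul_pow]
      congr 1
      field_simp
      exact hcdef.symm
    rw [h1, h2]
    calc (n.choose i : ℝ) * (1 - 1 / q) ^ i * ((q:ℝ) ^ i * (q:ℝ) ^ (-(n:ℤ)))
        = (n.choose i : ℝ) * ((1 - 1/(q:ℝ)) ^ i * (q:ℝ) ^ i) * (q:ℝ) ^ (-(n:ℤ)) := by ring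
      _ = (n.choose i : ℝ) * c ^ i * (q:ℝ) ^ (-(n:ℤ)) := by rw [h3]
  rw [Finset.sum_congr rfl hterm, ← Finset.sum_mul]
  have hzp : (0:ℝ) < (q:ℝ) ^ (-(n:ℤ)) := by positivity
  have hden_eq : (n.choose d : ℝ) * (q : ℝ) ^ (-(n : ℤ)) * c ^ d = a d * (q:ℝ)^(-(n:ℤ)) := by
    rw [hadef]; ring
  rw [hden_eq, mul_div_mul_right _ _ (ne_of_gt hzp)]
  rw [div_le_div_iff₀ had0 hDen]
  -- goal : (∑ a i) * Den ≤ Num * a d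
  have hDN : (n:ℝ) - ((q:ℝ)/c) * d + 1 = ((n:ℝ) - d + 1) * (1 - r) := by
    rw [h1r]
    field_simp
  rw [hDN]
  have hs2 : (∑ i ∈ Finset.range (d+1), a i) * (1 - r) ≤ a d := by
    calc (∑ i ∈ Finset.range (d+1), a i) * (1 - r)
        ≤ ((∑ k ∈ Finset.range (d+1), r ^ k) * a d) * (1 - r) := by
          apply mul_le_mul_of_nonneg_right hsum (le_of_lt h1r0)
      _ = ((∑ k ∈ Finset.range (d+1), r ^ k) * (1 - r)) * a d := by ring
      _ ≤ 1 * a d := mul_le_mul_of_nonneg_right hgeom (le_of_lt had0)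
      _ = a d := one_mul _
  calc (∑ i ∈ Finset.range (d+1), a i) * (((n:ℝ) - d + 1) * (1 - r))
      = ((∑ i ∈ Finset.range (d+1), a i) * (1 - r)) * ((n:ℝ) - d + 1) := by ring
    _ ≤ a d * ((n:ℝ) - d + 1) := mul_le_mul_of_nonneg_right hs2 (le_of_lt hND)
    _ = ((n:ℝ) - d + 1) * a d := by ring
end

section
/- For r ≤ ℓ ≤ k, the number of ℓ-tuples (v^1,...,v^ℓ) of pairwise non-collinear nonzero vectors in F_q^k whose span has dimension exactly r is at most C(ℓ,r) · q^{r(ℓ-r)} · ∏_{i=0}^{r-1}(q^k - q^i). -/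
open Submodule

/-- The number of `ℓ`-tuples of pairwise non-collinear nonzero vectors in `F_q^k`
whose span has dimension exactly `r` is at most
`C(ℓ,r) q^{r(ℓ-r)} ∏_{i=0}^{r-1} (q^k - q^i)`. -/
theorem card_tuples_rank_le (F : Type*) [Field F] [Fintype F] [DecidableEq F]
    (q k ℓ r : ℕ) (hq : Fintype.card F = q) (hr : 1 ≤ r) (hrℓ : r ≤ ℓ) (hℓk : ℓ ≤ k) :
    Nat.card {v : Fin ℓ → Fin k → F //
        (∀ i, v i ≠ 0) ∧
        (∀ i j, i ≠ j → ∀ c : F, v i ≠ c • v j) ∧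
        Module.finrank F (Submodule.span F (Set.range v)) = r} ≤
      ℓ.choose r * q ^ (r * (ℓ - r)) * ∏ i ∈ Finset.range r, (q ^ k - q ^ i) := by
  classical
  set V := Fin k → F
  -- the target type
  set T := ({S : Finset (Fin ℓ) // S.card = r} ×
      {f : Fin r → V // LinearIndependent F f} × (Fin (ℓ - r) → Fin r → F)) with hTdef
  -- reconstruction map
  set recon : T → (Fin ℓ → V) := fun p j =>
    if h : j ∈ p.1.1 then p.2.1.1 ((p.1.1.orderIsoOfFin p.1.2).symm ⟨j, h⟩)
    else ∑ i, p.2.2 ((p.1.1ᶜ.orderIsoOfFin (by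
        rw [Finset.card_compl, p.1.2, Fintype.card_fin])).symm
        ⟨j, Finset.mem_compl.2 h⟩) i • p.2.1.1 i with hrecon
  have key : ∀ v : {v : Fin ℓ → Fin k → F //
        (∀ i, v i ≠ 0) ∧
        (∀ i j, i ≠ j → ∀ c : F, v i ≠ c • v j) ∧
        Module.finrank F (Submodule.span F (Set.range v)) = r},
      ∃ p : T, recon p = v.1 := by
    rintro ⟨v, h0, hnc, hrank⟩
    have hinj : Function.Injective v := by
      intro i j hij
      by_contra h
      exact hnc i j h 1 (by rw [one_smul]; exact hij)
    obtain ⟨t, hts, hspan, hti⟩ := exists_linearIndependent F (Set.range v)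
    have htf : t.Finite := (Set.finite_range v).subset hts
    haveI : Fintype t := htf.fintype
    set S : Finset (Fin ℓ) := Finset.univ.filter (fun i => v i ∈ t) with hSdef
    have hmemS : ∀ i, i ∈ S ↔ v i ∈ t := by
      intro i; simp [hSdef]
    have himg : S.image v = t.toFinset := by
      ext x
      simp only [Finset.mem_image, Set.mem_toFinset]
      constructor
      · rintro ⟨i, hi, rfl⟩; exact (hmemS i).1 hi
      · intro hx
        obtain ⟨i, rfl⟩ := hts hx
        exact ⟨i, (hmemS i).2 hx, rfl⟩
    have hScard : S.card = r := by
      have h1 : (S.image v).card = S.card := Finset.card_image_of_injective S hinj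
      have h2 : t.toFinset.card = r := by
        rw [← finrank_span_set_eq_card hti, hspan, hrank]
      rw [← h2, ← himg, h1]
    set iso := S.orderIsoOfFin hScard with hiso
    set f : Fin r → V := fun i => v (iso i) with hf
    have hft : ∀ i, f i ∈ t := fun i => (hmemS _).1 (iso i).2
    have hfi : LinearIndependent F f := by
      have hg : Function.Injective (fun i : Fin r => (⟨f i, hft i⟩ : t)) := by
        intro i j hij
        have : f i = f j := congrArg Subtype.val hij
        exact iso.injective (Subtype.val_injective (hinj this))
      exact hti.comp _ hg
    have hrangef : Set.range f = t := by
      apply Set.eq_of_subset_of_subset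
      · rintro x ⟨i, rfl⟩; exact hft i
      · intro x hx
        obtain ⟨i, rfl⟩ := hts hx
        have hiS : i ∈ S := (hmemS i).2 hx
        exact ⟨iso.symm ⟨i, hiS⟩, by simp [hf]⟩
    have hSc : Sᶜ.card = ℓ - r := by
      rw [Finset.card_compl, hScard, Fintype.card_fin]
    set isoC := Sᶜ.orderIsoOfFin hSc with hisoC
    have hcoef : ∀ j' : Fin (ℓ - r), ∃ c : Fin r → F,
        ∑ i, c i • f i = v (isoC j') := by
      intro j'
      have : v (isoC j') ∈ span F (Set.range f) := by
        rw [hrangef, hspan]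
        exact subset_span ⟨_, rfl⟩
      exact (mem_span_range_iff_exists_fun F).1 this
    refine ⟨⟨⟨S, hScard⟩, ⟨f, hfi⟩, fun j' => Classical.choose (hcoef j')⟩, ?_⟩
    funext j
    rw [hrecon]
    by_cases h : j ∈ S
    · simp only [h, dif_pos]
      show f (iso.symm ⟨j, h⟩) = v j
      rw [hf]
      simp
    · simp only [h, dif_neg, not_false_iff]
      have hj : (⟨j, Finset.mem_compl.2 h⟩ : (Sᶜ : Finset (Fin ℓ))) =
          isoC (isoC.symm ⟨j, Finset.mem_compl.2 h⟩) := (isoC.apply_symm_apply _).symm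
      have := Classical.choose_spec (hcoef (isoC.symm ⟨j, Finset.mem_compl.2 h⟩))
      simp only [← hj] at this
      exact this
  -- the injection
  choose Φ hΦ using key
  have hΦinj : Function.Injective Φ := by
    intro v w hvw
    apply Subtype.ext
    rw [← hΦ v, ← hΦ w, hvw]
  have hle := Nat.card_le_card_of_injective Φ hΦinj
  refine hle.trans ?_
  have c1 : Nat.card {S : Finset (Fin ℓ) // S.card = r} = ℓ.choose r := by
    rw [Nat.card_eq_fintype_card, Fintype.card_finset_len, Fintype.card_fin]
  have c2 : Nat.card {f : Fin r → V // LinearIndependent F f}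
      = ∏ i ∈ Finset.range r, (q ^ k - q ^ i) := by
    have hfin : Module.finrank F V = k := by
      simp [V, Module.finrank_fintype_fun_eq_card]
    have := card_linearIndependent (K := F) (V := V) (k := r)
      (by rw [hfin]; exact hrℓ.trans hℓk)
    rw [this, hfin, hq]
    exact Fin.prod_univ_eq_prod_range (fun i => q ^ k - q ^ i) r
  have c3 : Nat.card (Fin (ℓ - r) → Fin r → F) = q ^ (r * (ℓ - r)) := by
    rw [Nat.card_eq_fintype_card]
    simp only [Fintype.card_fun, Fintype.card_fin, hq]
    rw [← pow_mul]
  have hcardT : Nat.card T = ℓ.choose r * ((∏ i ∈ Finset.range r, (q ^ k - q ^ i))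
      * q ^ (r * (ℓ - r))) := by
    rw [hTdef, Nat.card_prod, Nat.card_prod, c1, c2, c3]
  rw [hcardT]
  exact Nat.le_of_eq (by ring)
end

section
/- Z_d^m = Σ_{ℓ=1}^m S(m,ℓ) (q-1)^{m-ℓ} Σ_{(v^1,...,v^ℓ) ∈ Ω_ℓ} ∏_{i=1}^ℓ W_{v^i}(d), where S(m,ℓ) are Stirling numbers of the second kind and Ω_ℓ is the set of ℓ-tuples of pairwise non-collinear nonzero vectors in F_q^k. -/
def stirling2 : ℕ → ℕ → ℕ
  | 0, 0 => 1
  | 0, _ + 1 => 0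
  | _ + 1, 0 => 0
  | n + 1, k + 1 => (k + 1) * stirling2 n (k + 1) + stirling2 n k

/-- Hamming weight of a vector: number of nonzero coordinates. -/
def hwt {F : Type*} [Zero F] [DecidableEq F] {n : ℕ} (x : Fin n → F) : ℕ :=
  (Finset.univ.filter fun i => x i ≠ 0).card

open Classical Finset

lemma stirling2_zero_right (n : ℕ) : stirling2 (n+1) 0 = 0 := rfl

lemma stirling2_of_lt : ∀ {n j : ℕ}, n < j → stirling2 n j = 0
  | 0, _+1, _ => rfl
  | n+1, j+1, h => by
      have h' : n < j := Nat.lt_of_succ_lt_succ h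
      show (j+1) * stirling2 n (j+1) + stirling2 n j = 0
      rw [stirling2_of_lt h', stirling2_of_lt (Nat.lt_succ_of_lt h')]
      simp

lemma sum_Icc_one (N : ℕ) (f : ℕ → ℝ) :
    ∑ ℓ ∈ Icc 1 N, f ℓ = ∑ j ∈ range N, f (j+1) := by
  refine Finset.sum_bij' (fun ℓ _ => ℓ - 1) (fun j _ => j + 1) ?_ ?_ ?_ ?_ ?_
  · intro a ha; simp only [mem_Icc] at ha; simp only [mem_range]; omega
  · intro a ha; simp only [mem_range] at ha; simp only [mem_Icc]; omega
  · intro a ha; simp only [mem_Icc] at ha; show a - 1 + 1 = a; omega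
  · intro a ha; show a + 1 - 1 = a; omega
  · intro a ha; simp only [mem_Icc] at ha; show f a = f (a - 1 + 1); congr 1; omega

lemma key_reindex (m : ℕ) (hm : 1 ≤ m) (r : ℝ) (g : ℕ → ℝ) :
    ∑ ℓ ∈ Icc 1 (m+1), (stirling2 (m+1) ℓ : ℝ) * r ^ (m+1-ℓ) * g ℓ
      = ∑ ℓ ∈ Icc 1 m, (stirling2 m ℓ : ℝ) * r ^ (m-ℓ) * ((ℓ : ℝ) * r * g ℓ + g (ℓ+1)) := by
  rw [sum_Icc_one, sum_Icc_one]
  have hstep : ∀ j ∈ range (m+1),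
      (stirling2 (m+1) (j+1) : ℝ) * r ^ (m+1-(j+1)) * g (j+1)
        = ((j:ℝ)+1) * stirling2 m (j+1) * r ^ (m-j) * g (j+1)
          + (stirling2 m j : ℝ) * r ^ (m-j) * g (j+1) := by
    intro j _
    have : stirling2 (m+1) (j+1) = (j+1) * stirling2 m (j+1) + stirling2 m j := rfl
    rw [this]
    have : m + 1 - (j+1) = m - j := by omega
    rw [this]
    push_cast
    ring
  rw [Finset.sum_congr rfl hstep, Finset.sum_add_distrib]
  have h1 : ∑ j ∈ range (m+1), ((j:ℝ)+1) * stirling2 m (j+1) * r ^ (m-j) * g (j+1)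
      = ∑ j ∈ range m, ((j:ℝ)+1) * stirling2 m (j+1) * r ^ (m-j) * g (j+1) := by
    rw [Finset.sum_range_succ, stirling2_of_lt (Nat.lt_succ_self m)]
    simp
  have h2 : ∑ j ∈ range (m+1), (stirling2 m j : ℝ) * r ^ (m-j) * g (j+1)
      = ∑ j ∈ range m, (stirling2 m (j+1) : ℝ) * r ^ (m-(j+1)) * g (j+2) := by
    rw [Finset.sum_range_succ']
    obtain ⟨m', rfl⟩ : ∃ m', m = m' + 1 := ⟨m - 1, by omega⟩
    rw [stirling2_zero_right]
    simp
  rw [h1, h2, ← Finset.sum_add_distrib]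
  refine Finset.sum_congr rfl fun j hj => ?_
  rw [Finset.mem_range] at hj
  have hr : r ^ (m - j) = r ^ (m - (j+1)) * r := by
    rw [← pow_succ]
    congr 1
    omega
  rw [hr]
  push_cast
  ring


section Core
variable {F : Type*} [Field F] [Fintype F] [DecidableEq F] {k : ℕ}

noncomputable def Om (F : Type*) [Field F] [Fintype F] [DecidableEq F] (k ℓ : ℕ) :
    Finset (Fin ℓ → Fin k → F) :=
  univ.filter (fun v => (∀ i, v i ≠ 0) ∧ ∀ i j, i ≠ j → ∀ c : F, v i ≠ c • v j)

lemma idem_absorb (W : (Fin k → F) → ℝ) (hWidem : ∀ a, W a * W a = W a)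
    {ℓ : ℕ} (v : Fin ℓ → Fin k → F) (i : Fin ℓ) :
    W (v i) * ∏ j, W (v j) = ∏ j, W (v j) := by
  rw [← Finset.mul_prod_erase univ (fun j => W (v j)) (Finset.mem_univ i), ← mul_assoc,
    hWidem]

lemma collinear_sum (W : (Fin k → F) → ℝ) (hWidem : ∀ a, W a * W a = W a)
    (hWsc : ∀ (c : F) (a : Fin k → F), c ≠ 0 → W (c • a) = W a)
    {ℓ : ℕ} (v : Fin ℓ → Fin k → F) (hv0 : ∀ i, v i ≠ 0)
    (hvnc : ∀ i j, i ≠ j → ∀ c : F, v i ≠ c • v j) :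
    ∑ a ∈ univ.filter (fun a : Fin k → F => a ≠ 0 ∧ ∃ i, ∃ c : F, a = c • v i),
        W a * ∏ i, W (v i)
      = (ℓ : ℝ) * ((Fintype.card F : ℝ) - 1) * ∏ i, W (v i) := by
  have hset : univ.filter (fun a : Fin k → F => a ≠ 0 ∧ ∃ i, ∃ c : F, a = c • v i)
      = (univ.filter (fun p : Fin ℓ × F => p.2 ≠ 0)).image (fun p => p.2 • v p.1) := by
    ext a
    simp only [mem_filter, mem_univ, true_and, mem_image, Prod.exists]
    constructor
    · rintro ⟨ha, i, c, rfl⟩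
      refine ⟨i, c, ?_, rfl⟩
      rintro rfl
      exact ha (zero_smul _ _)
    · rintro ⟨i, c, hc, rfl⟩
      refine ⟨?_, i, c, rfl⟩
      intro h
      rcases smul_eq_zero.mp h with h | h
      · exact hc h
      · exact hv0 i h
  rw [hset, Finset.sum_image]
  · have hsplit : univ.filter (fun p : Fin ℓ × F => p.2 ≠ 0)
        = univ ×ˢ (univ.filter (fun c : F => c ≠ 0)) := by
      ext p
      simp [Finset.mem_product]
    rw [hsplit, Finset.sum_product]
    have hinner : ∀ i : Fin ℓ, ∑ c ∈ univ.filter (fun c : F => c ≠ 0),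
        W (c • v i) * ∏ j, W (v j) = ((Fintype.card F : ℝ) - 1) * ∏ j, W (v j) := by
      intro i
      have : ∀ c ∈ univ.filter (fun c : F => c ≠ 0),
          W (c • v i) * ∏ j, W (v j) = ∏ j, W (v j) := by
        intro c hc
        rw [Finset.mem_filter] at hc
        rw [hWsc c (v i) hc.2, idem_absorb W hWidem]
      rw [Finset.sum_congr rfl this, Finset.sum_const, nsmul_eq_mul]
      congr 1
      have : (univ.filter (fun c : F => c ≠ 0)) = univ.erase 0 := by
        ext c; simp [Finset.mem_erase, and_comm]
      rw [this, Finset.card_erase_of_mem (Finset.mem_univ 0), Finset.card_univ]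
      have hpos : 1 ≤ Fintype.card F := Fintype.card_pos
      push_cast [Nat.cast_sub hpos]
      ring
    rw [Finset.sum_congr rfl (fun i _ => hinner i), Finset.sum_const, nsmul_eq_mul,
      Finset.card_univ, Fintype.card_fin, mul_assoc]
  · rintro ⟨i, c⟩ hic ⟨j, c'⟩ hjc' h
    rw [Finset.mem_coe, Finset.mem_filter] at hic hjc'
    replace hic : c ≠ 0 := hic.2
    replace hjc' : c' ≠ 0 := hjc'.2
    simp only at h
    by_cases hij : i = j
    · subst hij
      have : (c - c') • v i = 0 := by
        rw [sub_smul, h, sub_self]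
      rcases smul_eq_zero.mp this with h' | h'
      · have : c = c' := by linear_combination (norm := ring_nf) h'
        simp [this]
      · exact absurd h' (hv0 i)
    · exfalso
      have : v i = (c⁻¹ * c') • v j := by
        rw [mul_smul, ← h, ← mul_smul, inv_mul_cancel₀ hic, one_smul]
      exact hvnc i j hij _ this

lemma noncollinear_sum (W : (Fin k → F) → ℝ) {ℓ : ℕ} :
    ∑ v ∈ Om F k ℓ, ∑ a ∈ univ.filter
        (fun a : Fin k → F => a ≠ 0 ∧ ∀ i, ∀ c : F, a ≠ c • v i),
        W a * ∏ i, W (v i)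
      = ∑ v ∈ Om F k (ℓ+1), ∏ i, W (v i) := by
  have hsig := Finset.sum_sigma (Om F k ℓ)
    (fun v => univ.filter (fun a : Fin k → F => a ≠ 0 ∧ ∀ i, ∀ c : F, a ≠ c • v i))
    (fun x => W x.2 * ∏ i, W (x.1 i))
  rw [← hsig]
  refine Finset.sum_bij' (fun x _ => Fin.snoc x.1 x.2) (fun v _ => ⟨Fin.init v, v (Fin.last ℓ)⟩)
    ?_ ?_ ?_ ?_ ?_
  · rintro ⟨v, a⟩ hx
    simp only [Finset.mem_sigma, Om, Finset.mem_filter, Finset.mem_univ, true_and] at hx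
    obtain ⟨⟨hv0, hvnc⟩, ha0, hanc⟩ := hx
    simp only [Om, Finset.mem_filter, Finset.mem_univ, true_and]
    refine ⟨?_, ?_⟩
    · intro i
      induction i using Fin.lastCases with
      | last => simpa using ha0
      | cast i => simpa using hv0 i
    · intro i j hij c
      induction i using Fin.lastCases with
      | last =>
        induction j using Fin.lastCases with
        | last => exact absurd rfl hij
        | cast j => simpa using hanc j c
      | cast i =>
        induction j using Fin.lastCases with
        | last =>
          simp only [Fin.snoc_castSucc, Fin.snoc_last]
          intro h
          have hc : c ≠ 0 := by
            rintro rfl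
            rw [zero_smul] at h
            exact hv0 i h
          have : a = c⁻¹ • v i := by
            rw [h, ← mul_smul, inv_mul_cancel₀ hc, one_smul]
          exact hanc i c⁻¹ this
        | cast j =>
          have hij' : i ≠ j := by
            rintro rfl; exact hij rfl
          simpa using hvnc i j hij' c
  · intro v hv
    simp only [Om, Finset.mem_filter, Finset.mem_univ, true_and] at hv
    obtain ⟨hv0, hvnc⟩ := hv
    simp only [Finset.mem_sigma, Om, Finset.mem_filter, Finset.mem_univ, true_and]
    refine ⟨⟨fun i => hv0 _, fun i j hij c => ?_⟩, hv0 _, fun i c => ?_⟩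
    · exact hvnc _ _ (fun h => hij (Fin.castSucc_inj.mp h)) c
    · exact hvnc (Fin.last ℓ) (Fin.castSucc i) (by simp [Fin.ext_iff]; omega) c
  · rintro ⟨v, a⟩ hx
    simp [Fin.init_snoc, Fin.snoc_last]
  · intro v hv
    exact Fin.snoc_init_self v
  · rintro ⟨v, a⟩ hx
    rw [Fin.prod_univ_castSucc]
    simp only [Fin.snoc_castSucc, Fin.snoc_last]
    exact mul_comm _ _

lemma step_lemma (W : (Fin k → F) → ℝ) (hWidem : ∀ a, W a * W a = W a)
    (hWsc : ∀ (c : F) (a : Fin k → F), c ≠ 0 → W (c • a) = W a) (ℓ : ℕ) :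
    (∑ a ∈ univ.filter (fun a : Fin k → F => a ≠ 0), W a)
        * (∑ v ∈ Om F k ℓ, ∏ i, W (v i))
      = (ℓ : ℝ) * ((Fintype.card F : ℝ) - 1) * (∑ v ∈ Om F k ℓ, ∏ i, W (v i))
        + ∑ v ∈ Om F k (ℓ+1), ∏ i, W (v i) := by
  rw [Finset.sum_mul_sum, Finset.sum_comm]
  have hmain : ∀ v ∈ Om F k ℓ,
      ∑ a ∈ univ.filter (fun a : Fin k → F => a ≠ 0), W a * ∏ i, W (v i)
        = (ℓ : ℝ) * ((Fintype.card F : ℝ) - 1) * ∏ i, W (v i)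
          + ∑ a ∈ univ.filter (fun a : Fin k → F => a ≠ 0 ∧ ∀ i, ∀ c : F, a ≠ c • v i),
              W a * ∏ i, W (v i) := by
    intro v hv
    simp only [Om, Finset.mem_filter, Finset.mem_univ, true_and] at hv
    obtain ⟨hv0, hvnc⟩ := hv
    have hsplit := Finset.sum_filter_add_sum_filter_not
      (univ.filter (fun a : Fin k → F => a ≠ 0))
      (fun a => ∃ i, ∃ c : F, a = c • v i) (fun a => W a * ∏ i, W (v i))
    rw [Finset.filter_filter, Finset.filter_filter] at hsplit
    rw [← hsplit, collinear_sum W hWidem hWsc v hv0 hvnc]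
    congr 1
    refine Finset.sum_congr ?_ (fun _ _ => rfl)
    ext a
    simp only [Finset.mem_filter, not_exists]
  rw [Finset.sum_congr rfl hmain, Finset.sum_add_distrib, ← Finset.mul_sum,
    noncollinear_sum W]
end Core


section Main
variable {F : Type*} [Field F] [Fintype F] [DecidableEq F] {k : ℕ}

lemma main_identity (W : (Fin k → F) → ℝ) (hWidem : ∀ a, W a * W a = W a)
    (hWsc : ∀ (c : F) (a : Fin k → F), c ≠ 0 → W (c • a) = W a)
    (m : ℕ) (hm : 1 ≤ m) :
    (∑ a ∈ univ.filter (fun a : Fin k → F => a ≠ 0), W a) ^ m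
      = ∑ ℓ ∈ Icc 1 m, (stirling2 m ℓ : ℝ) * ((Fintype.card F : ℝ) - 1) ^ (m - ℓ) *
          ∑ v ∈ Om F k ℓ, ∏ i, W (v i) := by
  induction m, hm using Nat.le_induction with
  | base =>
    rw [pow_one, Finset.Icc_self, Finset.sum_singleton]
    have h1 : stirling2 1 1 = 1 := rfl
    rw [h1, Nat.sub_self, pow_zero]
    push_cast
    rw [one_mul, one_mul]
    refine Finset.sum_bij' (fun a _ => fun _ : Fin 1 => a) (fun v _ => v 0) ?_ ?_ ?_ ?_ ?_
    · intro a ha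
      rw [Finset.mem_filter] at ha
      simp only [Om, Finset.mem_filter, Finset.mem_univ, true_and]
      exact ⟨fun _ => ha.2, fun i j hij => absurd (Subsingleton.elim i j) hij⟩
    · intro v hv
      simp only [Om, Finset.mem_filter, Finset.mem_univ, true_and] at hv
      rw [Finset.mem_filter]
      exact ⟨Finset.mem_univ _, hv.1 0⟩
    · intro a ha; rfl
    · intro v hv; funext i; rw [Subsingleton.elim i 0]
    · intro a ha; rw [Fin.prod_univ_one]
  | succ m hm ih =>
    rw [pow_succ, ih, key_reindex m hm ((Fintype.card F : ℝ) - 1)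
      (fun ℓ => ∑ v ∈ Om F k ℓ, ∏ i, W (v i)), Finset.sum_mul]
    refine Finset.sum_congr rfl fun ℓ _ => ?_
    have hstep := step_lemma W hWidem hWsc ℓ
    calc (stirling2 m ℓ : ℝ) * ((Fintype.card F : ℝ) - 1) ^ (m - ℓ) *
          (∑ v ∈ Om F k ℓ, ∏ i, W (v i)) *
          (∑ a ∈ univ.filter (fun a : Fin k → F => a ≠ 0), W a)
        = (stirling2 m ℓ : ℝ) * ((Fintype.card F : ℝ) - 1) ^ (m - ℓ) *
          ((∑ a ∈ univ.filter (fun a : Fin k → F => a ≠ 0), W a) *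
            ∑ v ∈ Om F k ℓ, ∏ i, W (v i)) := by ring
      _ = _ := by rw [hstep]

end Main

set_option maxHeartbeats 1000000 in
open Classical in
/-- `Z_d^m = ∑_{ℓ=1}^m S(m,ℓ) (q-1)^{m-ℓ} ∑_{(v^1,…,v^ℓ) ∈ Ω_ℓ} ∏_{i=1}^ℓ W_{v^i}(d)`,
where `W_a(d)` is the indicator of `{wt(∑_i a_i X_i) ≤ d}`,
`Z_d = ∑_{a ≠ 0} W_a(d)`, and `Ω_ℓ` is the set of `ℓ`-tuples of pairwise non-collinear
nonzero vectors in `F_q^k`. -/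
theorem Z_pow_eq_stirling_sum (F : Type*) [Field F] [Fintype F] [DecidableEq F]
    (q k n m d : ℕ) (hq : Fintype.card F = q) (hm : 1 ≤ m) (hmk : m ≤ k)
    (X : Fin k → Fin n → F) :
    (∑ a ∈ Finset.univ.filter (fun a : Fin k → F => a ≠ 0),
        (if hwt (∑ i, a i • X i) ≤ d then (1 : ℝ) else 0)) ^ m =
      ∑ ℓ ∈ Finset.Icc 1 m, (stirling2 m ℓ : ℝ) * ((q : ℝ) - 1) ^ (m - ℓ) *
        ∑ v ∈ Finset.univ.filter (fun v : Fin ℓ → Fin k → F =>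
            (∀ i, v i ≠ 0) ∧ ∀ i j, i ≠ j → ∀ c : F, v i ≠ c • v j),
          ∏ i, (if hwt (∑ t, v i t • X t) ≤ d then (1 : ℝ) else 0) := by
  subst hq
  refine main_identity (fun a => if hwt (∑ i, a i • X i) ≤ d then (1 : ℝ) else 0) ?_ ?_ m hm
  · intro a
    by_cases h : hwt (∑ i, a i • X i) ≤ d <;> simp [h]
  · intro c a hc
    have h1 : (∑ i, (c • a) i • X i) = c • ∑ i, a i • X i := by
      rw [Finset.smul_sum]
      refine Finset.sum_congr rfl fun i _ => ?_
      simp [mul_smul]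
    have h2 : hwt (c • (∑ i, a i • X i) : Fin n → F) = hwt (∑ i, a i • X i) := by
      unfold hwt
      congr 1
      apply Finset.filter_congr
      intro t _
      simp [hc]
    simp only [h1, h2]
end

section
/- The inverse of the h×h matrix B with b_{ij} = j^i has entries b'_{ij} given by: for j < h, b'_{ij} = (-1)^{j-1} (Σ over 1 ≤ m_1 < ... < m_{h-j} ≤ h with all m_t ≠ i of m_1···m_{h-j}) / (i ∏_{1≤m≤h, m≠i}(m-i)); and b'_{ih} = 1 / (i ∏_{1≤m≤h, m≠i}(i-m)). -/
open Finset Polynomial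

lemma pmi_prod_coeff (S : Finset ℕ) {k : ℕ} (hk : k ≤ S.card) :
    (∏ m ∈ S, (X - C (m : ℚ))).coeff k =
      (-1 : ℚ) ^ (S.card - k) * ∑ t ∈ S.powersetCard (S.card - k), ∏ m ∈ t, (m : ℚ) := by
  have h1 := Multiset.prod_X_sub_C_coeff (S.val.map (fun m : ℕ => (m : ℚ)))
    (k := k) (by simpa using hk)
  simp only [Multiset.card_map, Multiset.map_map, Function.comp] at h1
  rw [Finset.prod]
  rw [show (Multiset.map (fun m : ℕ => X - C (m : ℚ)) S.val)
      = (Multiset.map (fun x : ℕ => X - C ((x : ℚ))) S.val) from rfl, h1,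
    Finset.esymm_map_val]
  rfl

lemma pmi_key (h : ℕ) (hh : 0 < h) (S : Finset ℕ) (hcard : S.card = h - 1) (y : ℚ) :
    ∑ j ∈ Finset.range h,
        (-1 : ℚ) ^ j * (∑ t ∈ S.powersetCard (h - 1 - j), ∏ m ∈ t, (m : ℚ)) * y ^ j
      = (-1 : ℚ) ^ (h - 1) * ∏ m ∈ S, (y - (m : ℚ)) := by
  set P : Polynomial ℚ := ∏ m ∈ S, (X - C (m : ℚ)) with hP
  have hdeg : P.natDegree = h - 1 := by
    rw [hP, Polynomial.natDegree_prod _ _ (fun m _ => X_sub_C_ne_zero _),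
      Finset.sum_congr rfl (fun m _ => natDegree_X_sub_C _),
      Finset.sum_const, smul_eq_mul, mul_one, hcard]
  have heval : P.eval y = ∏ m ∈ S, (y - (m : ℚ)) := by
    simp [hP, eval_prod]
  rw [← heval, Polynomial.eval_eq_sum_range' (n := h) (by omega), Finset.mul_sum]
  refine Finset.sum_congr rfl fun j hj => ?_
  rw [Finset.mem_range] at hj
  rw [pmi_prod_coeff S (k := j) (by omega), hcard]
  have hs : (-1 : ℚ) ^ (h - 1) * (-1 : ℚ) ^ (h - 1 - j) = (-1 : ℚ) ^ j := by
    have h2 : (-1 : ℚ) ^ (h - 1) = (-1 : ℚ) ^ j * (-1 : ℚ) ^ (h - 1 - j) := by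
      rw [← pow_add]; congr 1; omega
    rw [h2, mul_assoc, ← pow_add, ← two_mul, pow_mul]
    norm_num
  rw [← mul_assoc, ← mul_assoc, hs]


/-- Entry formula for the inverse of the `h × h` matrix `B` with `b_{ij} = j^i`
(`1 ≤ i, j ≤ h`): for `j < h`,
`b'_{ij} = (-1)^{j-1} (∑_{1 ≤ m_1 < ⋯ < m_{h-j} ≤ h, m_t ≠ i} m_1 ⋯ m_{h-j})
            / (i ∏_{1 ≤ m ≤ h, m ≠ i} (m - i))`,
and `b'_{ih} = 1 / (i ∏_{1 ≤ m ≤ h, m ≠ i} (i - m))`.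
Here rows/columns of `Fin h` are identified with `{1, …, h}` via `i ↦ i + 1`. -/
theorem power_matrix_inverse_entries (h : ℕ) (hh : 0 < h)
    (i j : Fin h) :
    (Matrix.of fun i j : Fin h => (((j : ℕ) + 1 : ℚ)) ^ ((i : ℕ) + 1))⁻¹ i j =
      if (j : ℕ) + 1 < h then
        ((-1 : ℚ) ^ ((j : ℕ) + 1 - 1) *
            ∑ s ∈ ((Finset.Icc 1 h).erase ((i : ℕ) + 1)).powersetCard (h - ((j : ℕ) + 1)),
              ∏ m ∈ s, (m : ℚ)) /
          (((i : ℕ) + 1 : ℚ) *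
            ∏ m ∈ (Finset.Icc 1 h).erase ((i : ℕ) + 1), ((m : ℚ) - ((i : ℕ) + 1)))
      else
        1 / (((i : ℕ) + 1 : ℚ) *
            ∏ m ∈ (Finset.Icc 1 h).erase ((i : ℕ) + 1), (((i : ℕ) + 1 : ℚ) - (m : ℚ))) := by
  set S : Fin h → Finset ℕ := fun i => (Finset.Icc 1 h).erase ((i : ℕ) + 1) with hS
  have hmem : ∀ i : Fin h, (i : ℕ) + 1 ∈ Finset.Icc 1 h := fun i => by
    simp only [Finset.mem_Icc]; omega
  have hcard : ∀ i : Fin h, (S i).card = h - 1 := fun i => by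
    rw [hS]; rw [Finset.card_erase_of_mem (hmem i), Nat.card_Icc]; omega
  set D : Fin h → ℚ := fun i => ∏ m ∈ S i, ((m : ℚ) - ((i : ℕ) + 1)) with hD
  have hDne : ∀ i : Fin h, D i ≠ 0 := by
    intro i
    rw [hD]
    refine Finset.prod_ne_zero_iff.mpr fun m hm => ?_
    have hne : m ≠ (i : ℕ) + 1 := Finset.ne_of_mem_erase hm
    intro hzero
    apply hne
    have : (m : ℚ) = (((i : ℕ) + 1 : ℕ) : ℚ) := by push_cast; linarith
    exact_mod_cast this
  have hxne : ∀ i : Fin h, ((i : ℕ) + 1 : ℚ) ≠ 0 := fun i => by positivity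
  have hprod : ∀ i : Fin h, ∏ m ∈ S i, (((i : ℕ) + 1 : ℚ) - (m : ℚ))
      = (-1 : ℚ) ^ (h - 1) * D i := by
    intro i
    calc ∏ m ∈ S i, (((i : ℕ) + 1 : ℚ) - (m : ℚ))
        = ∏ m ∈ S i, ((-1) * ((m : ℚ) - ((i : ℕ) + 1))) :=
          Finset.prod_congr rfl fun m _ => by ring
      _ = (-1 : ℚ) ^ (S i).card * D i := by rw [Finset.prod_mul_distrib, Finset.prod_const, hD]
      _ = (-1 : ℚ) ^ (h - 1) * D i := by rw [hcard i]
  set Cmat : Matrix (Fin h) (Fin h) ℚ := Matrix.of fun i j =>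
    (-1 : ℚ) ^ (j : ℕ) * (∑ t ∈ (S i).powersetCard (h - 1 - (j : ℕ)), ∏ m ∈ t, (m : ℚ)) /
      ((((i : ℕ) + 1 : ℚ)) * D i) with hC
  have hCB : Cmat * (Matrix.of fun i j : Fin h => (((j : ℕ) + 1 : ℚ)) ^ ((i : ℕ) + 1)) = 1 := by
    ext i k
    rw [Matrix.mul_apply]
    have hsum : ∑ j : Fin h, Cmat i j * (((k : ℕ) + 1 : ℚ)) ^ ((j : ℕ) + 1)
        = (((-1 : ℚ) ^ (h - 1) * ∏ m ∈ S i, ((((k : ℕ) + 1 : ℚ)) - (m : ℚ)))) *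
          ((((k : ℕ) + 1 : ℚ)) / ((((i : ℕ) + 1 : ℚ)) * D i)) := by
      calc ∑ j : Fin h, Cmat i j * (((k : ℕ) + 1 : ℚ)) ^ ((j : ℕ) + 1)
          = ∑ j : Fin h, ((-1 : ℚ) ^ (j : ℕ) *
              (∑ t ∈ (S i).powersetCard (h - 1 - (j : ℕ)), ∏ m ∈ t, (m : ℚ)) *
              (((k : ℕ) + 1 : ℚ)) ^ (j : ℕ)) *
              ((((k : ℕ) + 1 : ℚ)) / ((((i : ℕ) + 1 : ℚ)) * D i)) := by
            refine Finset.sum_congr rfl fun j _ => ?_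
            simp only [hC, Matrix.of_apply]
            ring
        _ = (∑ j ∈ Finset.range h, (-1 : ℚ) ^ j *
              (∑ t ∈ (S i).powersetCard (h - 1 - j), ∏ m ∈ t, (m : ℚ)) *
              (((k : ℕ) + 1 : ℚ)) ^ j) *
              ((((k : ℕ) + 1 : ℚ)) / ((((i : ℕ) + 1 : ℚ)) * D i)) := by
            rw [← Finset.sum_mul, ← Fin.sum_univ_eq_sum_range]
        _ = _ := by rw [pmi_key h hh (S i) (hcard i)]
    simp only [Matrix.of_apply] at hsum ⊢
    rw [hsum]
    rcases eq_or_ne i k with rfl | hik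
    · rw [Matrix.one_apply_eq, hprod i]
      have hsq : (-1 : ℚ) ^ (h - 1) * (-1 : ℚ) ^ (h - 1) = 1 := by
        rw [← mul_pow]; norm_num
      rw [← mul_assoc, hsq, one_mul, mul_div_assoc',
        div_eq_one_iff_eq (mul_ne_zero (hxne i) (hDne i))]
      ring
    · rw [Matrix.one_apply_ne hik]
      have hk : (k : ℕ) + 1 ∈ S i := by
        rw [hS]
        refine Finset.mem_erase.mpr ⟨?_, hmem k⟩
        simp only [ne_eq, add_left_inj]
        exact fun hc => hik (Fin.ext hc).symm
      rw [Finset.prod_eq_zero hk (by push_cast; ring)]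
      ring
  have hinv := Matrix.inv_eq_left_inv hCB
  rw [hinv]
  split_ifs with hlt
  · have e2 : h - ((j : ℕ) + 1) = h - 1 - (j : ℕ) := by omega
    simp only [hC, Matrix.of_apply, Nat.add_sub_cancel, e2]
    rfl
  · have hj : (j : ℕ) = h - 1 := by omega
    simp only [hC, Matrix.of_apply, hj, Nat.sub_self, Finset.powersetCard_zero,
      Finset.sum_singleton, Finset.prod_empty, mul_one]
    rw [hprod i]
    have hsq : (-1 : ℚ) ^ (h - 1) * (-1 : ℚ) ^ (h - 1) = 1 := by
      rw [← mul_pow]; norm_num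
    rw [div_eq_div_iff (mul_ne_zero (hxne i) (hDne i))
      (mul_ne_zero (hxne i) (mul_ne_zero (pow_ne_zero _ (by norm_num)) (hDne i)))]
    linear_combination ((((i : ℕ) + 1 : ℚ)) * D i) * hsq
end

section
/- For λ ≥ 1 and integers ℓ ≥ λ, max_{t ∈ [0,1]} (tℓ)^{1-t} λ^t ≤ 2ℓ / (1 + log(ℓ/λ)). -/
private lemma aux_xexp (x : ℝ) (hx : 0 ≤ x) : x * Real.exp (-x) ≤ Real.exp (-1) := by
  have h : x ≤ Real.exp (x - 1) := by
    have := Real.add_one_le_exp (x - 1); linarith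
  calc x * Real.exp (-x) ≤ Real.exp (x - 1) * Real.exp (-x) :=
        mul_le_mul_of_nonneg_right h (Real.exp_nonneg _)
    _ = Real.exp (-1) := by rw [← Real.exp_add]; ring_nf

private lemma aux_exp_neg_one_le_log_two : Real.exp (-1) ≤ Real.log 2 := by
  have h1 : (2:ℝ) ≤ Real.exp 1 := by
    have := Real.add_one_le_exp (1:ℝ); linarith
  have h2 : Real.exp (-1) ≤ 1/2 := by
    rw [Real.exp_neg]
    rw [inv_le_comm₀ (Real.exp_pos 1) (by norm_num)]
    linarith
  have h3 : (0.6931471803 : ℝ) < Real.log 2 := Real.log_two_gt_d9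
  linarith

private lemma aux_exp_neg_one_le_half : Real.exp (-1) ≤ 1/2 := by
  have h1 : (2:ℝ) ≤ Real.exp 1 := by
    have := Real.add_one_le_exp (1:ℝ); linarith
  rw [Real.exp_neg]
  rw [inv_le_comm₀ (Real.exp_pos 1) (by norm_num)]
  linarith

/-- For `λ ≥ 1` and `ℓ ≥ λ`, `max_{t ∈ [0,1]} (tℓ)^{1-t} λ^t ≤ 2ℓ / (1 + log(ℓ/λ))`. -/
theorem max_interpolation_bound (lam ℓ : ℝ) (hlam : 1 ≤ lam) (hℓ : lam ≤ ℓ) :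
    ∀ t ∈ Set.Icc (0 : ℝ) 1,
      (t * ℓ) ^ (1 - t) * lam ^ t ≤ 2 * ℓ / (1 + Real.log (ℓ / lam)) := by
  intro t ht
  obtain ⟨ht0, ht1⟩ := ht
  have hlam0 : (0:ℝ) < lam := lt_of_lt_of_le one_pos hlam
  have hℓ0 : (0:ℝ) < ℓ := lt_of_lt_of_le hlam0 hℓ
  set L := Real.log (ℓ / lam) with hLdef
  have hL0 : 0 ≤ L := Real.log_nonneg ((one_le_div hlam0).2 hℓ)
  have h1L : 0 < 1 + L := by linarith
  rcases eq_or_lt_of_le ht0 with h0 | h0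
  · -- t = 0
    rw [← h0]
    simp only [zero_mul, sub_zero, Real.zero_rpow one_ne_zero, Real.rpow_zero]
    positivity
  · -- t > 0
    have htℓ : 0 < t * ℓ := mul_pos h0 hℓ0
    have hloglam : Real.log lam = Real.log ℓ - L := by
      rw [hLdef, Real.log_div (ne_of_gt hℓ0) (ne_of_gt hlam0)]; ring
    have key : (t * ℓ) ^ (1 - t) * lam ^ t
        = ℓ * (t * Real.exp (-(t * Real.log t)) * Real.exp (-(t * L))) := by
      rw [Real.rpow_def_of_pos htℓ, Real.rpow_def_of_pos hlam0, ← Real.exp_add]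
      have hrhs : ℓ * (t * Real.exp (-(t * Real.log t)) * Real.exp (-(t * L)))
          = Real.exp (Real.log ℓ + Real.log t + -(t * Real.log t) + -(t * L)) := by
        rw [Real.exp_add, Real.exp_add, Real.exp_add, Real.exp_log hℓ0, Real.exp_log h0]
        ring
      rw [hrhs]
      congr 1
      rw [Real.log_mul (ne_of_gt h0) (ne_of_gt hℓ0), hloglam]
      ring
    rw [key]
    -- reduce to S * (1 + L) ≤ 2
    have hS : t * Real.exp (-(t * Real.log t)) * Real.exp (-(t * L)) * (1 + L) ≤ 2 := by
      have hA : Real.exp (-(t * Real.log t)) ≤ 2 := by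
        have hlogt : Real.log t ≤ 0 := Real.log_nonpos ht0 ht1
        have hx : -(t * Real.log t) ≤ Real.exp (-1) := by
          have := aux_xexp (-Real.log t) (by linarith)
          have hte : Real.exp (-(-Real.log t)) = t := by
            rw [neg_neg, Real.exp_log h0]
          rw [hte] at this
          nlinarith
        calc Real.exp (-(t * Real.log t)) ≤ Real.exp (Real.log 2) :=
              Real.exp_le_exp.2 (le_trans hx aux_exp_neg_one_le_log_two)
          _ = 2 := Real.exp_log (by norm_num)
      have hexp_nonneg : (0:ℝ) ≤ Real.exp (-(t * Real.log t)) := Real.exp_nonneg _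
      have hexpL_nonneg : (0:ℝ) ≤ Real.exp (-(t * L)) := Real.exp_nonneg _
      rcases le_or_gt L 1 with hL1 | hL1
      · -- L ≤ 1
        have hB : t * Real.exp (-(t * L)) ≤ Real.exp (-L) := by
          have h1 : t ≤ Real.exp (t * L - L) := by
            have h2 : t - 1 ≤ t * L - L := by nlinarith
            have h3 : t ≤ Real.exp (t - 1) := by
              have := Real.add_one_le_exp (t - 1); linarith
            exact le_trans h3 (Real.exp_le_exp.2 h2)
          calc t * Real.exp (-(t * L)) ≤ Real.exp (t * L - L) * Real.exp (-(t * L)) :=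
                mul_le_mul_of_nonneg_right h1 hexpL_nonneg
            _ = Real.exp (-L) := by rw [← Real.exp_add]; ring_nf
        have hC : (1 + L) * Real.exp (-L) ≤ 1 := by
          rw [Real.exp_neg]
          rw [mul_inv_le_iff₀ (Real.exp_pos L)]
          have := Real.add_one_le_exp L; linarith
        have hexpL' : (0:ℝ) ≤ Real.exp (-L) := Real.exp_nonneg _
        have htB : 0 ≤ t * Real.exp (-(t * L)) := by positivity
        nlinarith [mul_le_mul hA hB htB (by norm_num : (0:ℝ) ≤ 2)]
      · -- L > 1
        have hB : t * Real.exp (-(t * L)) * L ≤ Real.exp (-1) := by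
          have := aux_xexp (t * L) (by positivity)
          nlinarith
        have htB : 0 ≤ t * Real.exp (-(t * L)) := by positivity
        have h12 : 1 + L ≤ 2 * L := by linarith
        have hhalf := aux_exp_neg_one_le_half
        nlinarith [mul_le_mul hA (le_refl (t * Real.exp (-(t * L)))) htB (by norm_num : (0:ℝ) ≤ 2),
          mul_nonneg htB hL0]
    have hS' : t * Real.exp (-(t * Real.log t)) * Real.exp (-(t * L)) ≤ 2 / (1 + L) := by
      rw [le_div_iff₀ h1L]; exact hS
    calc ℓ * (t * Real.exp (-(t * Real.log t)) * Real.exp (-(t * L)))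
        ≤ ℓ * (2 / (1 + L)) := mul_le_mul_of_nonneg_left hS' (le_of_lt hℓ0)
      _ = 2 * ℓ / (1 + L) := by ring
end

section
/- Let v^1,...,v^ℓ be nonzero vectors in F_q^k whose span has dimension r < ℓ. Then there exist an index set after reordering and s ≤ r such that v^1,...,v^s, v^{s+2},...,v^{r+1} are linearly independent and v^{s+1} = Σ_{i=1}^s c_i v^i with all c_i ∈ F_q \ {0}. -/
set_option maxHeartbeats 1000000

open Finset Submodule

lemma getElem_idx_congr {α : Type*} (l : List α) {m n : ℕ} (h : m = n) (hm : m < l.length) :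
    l[m]'hm = l[n]'(h ▸ hm) := by subst h; rfl

lemma extend_indep (F : Type*) [Field F] {k ℓ r : ℕ}
    (v : Fin ℓ → Fin k → F)
    (hrank : Module.finrank F (Submodule.span F (Set.range v)) = r) :
    ∀ (d : ℕ) (B : Finset (Fin ℓ)), B.card + d = r →
      LinearIndependent F (fun i : (B : Set (Fin ℓ)) => v i) →
      ∃ C : Finset (Fin ℓ), B ⊆ C ∧ C.card = r ∧
        LinearIndependent F (fun i : (C : Set (Fin ℓ)) => v i) := by
  classical
  intro d
  induction d with
  | zero => intro B hB hind; exact ⟨B, subset_rfl, by omega, hind⟩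
  | succ n ih =>
    intro B hB hind
    have hex : ∃ j, v j ∉ Submodule.span F (v '' (B : Set (Fin ℓ))) := by
      by_contra h
      push_neg at h
      have hle : Submodule.span F (Set.range v) ≤ Submodule.span F (v '' (B : Set (Fin ℓ))) :=
        Submodule.span_le.2 (by rintro _ ⟨j, rfl⟩; exact h j)
      have h1 : Module.finrank F (Submodule.span F (v '' (B : Set (Fin ℓ)))) ≤ B.card := by
        have h2 := finrank_span_finset_le_card (R := F) (B.image v)
        have h3 : ((B.image v : Finset (Fin k → F)) : Set (Fin k → F)) = v '' (B : Set (Fin ℓ)) := by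
          simp [Finset.coe_image]
        rw [Set.finrank, h3] at h2
        exact h2.trans (Finset.card_image_le)
      have := (Submodule.finrank_mono hle).trans h1
      omega
    obtain ⟨j, hj⟩ := hex
    have hjB : j ∉ B := fun hjB => hj (Submodule.subset_span ⟨j, hjB, rfl⟩)
    have hind' : LinearIndependent F (fun i : ((insert j B : Finset (Fin ℓ)) : Set (Fin ℓ)) => v i) := by
      rw [Finset.coe_insert]
      exact (linearIndepOn_insert (f := v) (by simpa using hjB)).2 ⟨hind, hj⟩
    obtain ⟨C, hBC, hC, hCind⟩ := ih (insert j B) (by rw [Finset.card_insert_of_notMem hjB]; omega) hind'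
    exact ⟨C, (Finset.subset_insert _ _).trans hBC, hC, hCind⟩


/-- If nonzero vectors `v^1,…,v^ℓ` in `F_q^k` span a subspace of dimension `r < ℓ`, then
after reordering there exist `s ≤ r` such that `v^1,…,v^s,v^{s+2},…,v^{r+1}` are linearly
independent and `v^{s+1} = ∑_{i=1}^s c_i v^i` with all `c_i ≠ 0`. -/
theorem reorder_dependent_tuple (F : Type*) [Field F] [Fintype F] [DecidableEq F]
    (k ℓ r : ℕ) (hr : 1 ≤ r) (hrℓ : r < ℓ) (hℓk : ℓ ≤ k)
    (v : Fin ℓ → Fin k → F) (hv : ∀ i, v i ≠ 0)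
    (hrank : Module.finrank F (Submodule.span F (Set.range v)) = r) :
    ∃ σ : Equiv.Perm (Fin ℓ), ∃ s : ℕ, ∃ hs : s ≤ r, ∃ c : Fin s → F,
      (∀ i, c i ≠ 0) ∧
      LinearIndependent F (fun i : {i : Fin (r + 1) // (i : ℕ) ≠ s} =>
        v (σ (Fin.castLE hrℓ i.1))) ∧
      v (σ ⟨s, by omega⟩) = ∑ i : Fin s, c i • v (σ (Fin.castLE (by omega) i)) := by
  classical
  -- Step 1: the family is not linearly independent
  have hnli : ¬ LinearIndependent F v := by
    intro h
    have h1 := finrank_span_eq_card h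
    rw [hrank, Fintype.card_fin] at h1
    omega
  obtain ⟨g0, hg0, i0, hi0⟩ := Fintype.not_linearIndependent_iff.1 hnli
  -- Step 2: minimal-support dependence relation
  set A : Finset (Fin ℓ → F) :=
    Finset.univ.filter (fun g => ∑ i, g i • v i = 0 ∧ g ≠ 0) with hAdef
  have hA : A.Nonempty := by
    refine ⟨g0, ?_⟩
    simp only [hAdef, Finset.mem_filter, Finset.mem_univ, true_and]
    exact ⟨hg0, fun h => hi0 (by rw [h]; rfl)⟩
  obtain ⟨g, hgA, hgmin⟩ :=
    Finset.exists_min_image A (fun g => (Finset.univ.filter (fun i => g i ≠ 0)).card) hA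
  simp only [hAdef, Finset.mem_filter, Finset.mem_univ, true_and] at hgA
  obtain ⟨hrel, hgne⟩ := hgA
  set T : Finset (Fin ℓ) := Finset.univ.filter (fun i => g i ≠ 0) with hTdef
  have hTsum : ∑ i ∈ T, g i • v i = 0 := by
    rw [← hrel]
    exact Finset.sum_filter_of_ne (fun i _ h hgi => h (by rw [hgi, zero_smul]))
  -- Step 3: the support has at least two elements
  have hTne : T.Nonempty := by
    obtain ⟨i, hi⟩ := Function.ne_iff.1 hgne
    exact ⟨i, by simp only [hTdef, Finset.mem_filter, Finset.mem_univ, true_and]; simpa using hi⟩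
  have hT2 : 2 ≤ T.card := by
    by_contra h
    push_neg at h
    obtain ⟨j, hj⟩ := Finset.card_eq_one.1 (le_antisymm (by omega) hTne.card_pos)
    rw [hj, Finset.sum_singleton] at hTsum
    have hgj : g j ≠ 0 := by
      have : j ∈ T := by rw [hj]; exact Finset.mem_singleton_self j
      simpa [hTdef] using this
    exact hv j (by
      have := congrArg (fun x => (g j)⁻¹ • x) hTsum
      simpa [smul_smul, inv_mul_cancel₀ hgj] using this)
  obtain ⟨j₀, hj₀T⟩ := hTne
  have hgj₀ : g j₀ ≠ 0 := by simpa [hTdef] using hj₀T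
  set T' : Finset (Fin ℓ) := T.erase j₀ with hT'def
  have hj₀T' : j₀ ∉ T' := Finset.notMem_erase _ _
  set s : ℕ := T'.card with hsdef
  have hscard : s + 1 = T.card := by
    rw [hsdef, hT'def, Finset.card_erase_of_mem hj₀T]; omega
  have hs1 : 1 ≤ s := by omega
  -- Step 4: the vectors indexed by T' are linearly independent (minimality)
  have hindep : LinearIndependent F (fun i : (T' : Set (Fin ℓ)) => v i) := by
    by_contra hdep
    obtain ⟨h', hsum', i', hi'⟩ := Fintype.not_linearIndependent_iff.1 hdep
    set h2 : Fin ℓ → F := fun i => if hi : i ∈ T' then h' ⟨i, hi⟩ else 0 with hh2def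
    have hsum2 : ∑ i, h2 i • v i = 0 := by
      rw [← Finset.sum_filter_of_ne (s := Finset.univ)
        (p := fun i => i ∈ T') (fun i _ hne => by
          by_contra hmem
          exact hne (by simp [hh2def, hmem]))]
      rw [Finset.filter_mem_eq_inter, Finset.univ_inter]
      rw [← hsum', ← Finset.sum_attach T' (fun i => h2 i • v i)]
      exact Finset.sum_congr rfl (fun i _ => by simp [hh2def, i.2])
    have h2ne : h2 ≠ 0 := by
      intro h0
      apply hi'
      have := congrFun h0 i'.1
      simpa [hh2def, i'.2] using this
    have hmem2 : h2 ∈ A := by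
      simp only [hAdef, Finset.mem_filter, Finset.mem_univ, true_and]
      exact ⟨hsum2, h2ne⟩
    have hcard2 : (Finset.univ.filter (fun i => h2 i ≠ 0)).card < T.card := by
      have hsub : Finset.univ.filter (fun i => h2 i ≠ 0) ⊆ T' := by
        intro i hi
        simp only [Finset.mem_filter, Finset.mem_univ, true_and, hh2def] at hi
        by_contra hmem
        exact hi (by simp [hmem])
      have := Finset.card_le_card hsub
      omega
    exact absurd (hgmin h2 hmem2) (by omega)
  -- Step 5: express v j₀ as a combination over T'
  set cc : Fin ℓ → F := fun i => -((g j₀)⁻¹ * g i) with hccdef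
  have hccne : ∀ i ∈ T', cc i ≠ 0 := by
    intro i hi
    have hgi : g i ≠ 0 := by
      have : i ∈ T := Finset.mem_of_mem_erase hi
      simpa [hTdef] using this
    simp [hccdef, hgj₀, hgi]
  have hvj₀ : v j₀ = ∑ i ∈ T', cc i • v i := by
    have h1 : g j₀ • v j₀ + ∑ i ∈ T', g i • v i = 0 := by
      have h0 := Finset.add_sum_erase T (fun i => g i • v i) hj₀T
      rw [hT'def, h0]
      exact hTsum
    have h2 : g j₀ • v j₀ = ∑ i ∈ T', (-(g i)) • v i := by
      have hneg := neg_eq_of_add_eq_zero_left h1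
      rw [← hneg, ← Finset.sum_neg_distrib]
      exact Finset.sum_congr rfl (fun i _ => by rw [neg_smul])
    have := congrArg (fun x => (g j₀)⁻¹ • x) h2
    simp only [smul_smul, inv_mul_cancel₀ hgj₀, one_smul, Finset.smul_sum] at this
    rw [this]
    exact Finset.sum_congr rfl (fun i _ => by rw [hccdef]; ring_nf)
  -- Step 6: s ≤ r
  have hsr : s ≤ r := by
    have h1 := finrank_span_eq_card hindep
    have h2 : Set.range (fun i : (T' : Set (Fin ℓ)) => v i) = v '' (T' : Set (Fin ℓ)) :=
      Set.range_restrict v _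
    rw [h2] at h1
    have h3 : Submodule.span F (v '' (T' : Set (Fin ℓ))) ≤ Submodule.span F (Set.range v) :=
      Submodule.span_mono (Set.image_subset_range _ _)
    have h4 := Submodule.finrank_mono (R := F) h3
    rw [h1, hrank] at h4
    simpa [hsdef] using h4
  -- Step 7: extend T' to an independent set C of size r
  obtain ⟨C, hT'C, hCcard, hCindep⟩ :=
    extend_indep F v hrank (r - s) T' (by omega) hindep
  have hj₀C : j₀ ∉ C := by
    intro hj₀C
    have hins : ((insert j₀ T' : Finset (Fin ℓ)) : Set (Fin ℓ)) ⊆ (C : Set (Fin ℓ)) := by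
      intro x hx
      simp only [Finset.coe_insert, Set.mem_insert_iff] at hx
      rcases hx with rfl | hx
      · exact hj₀C
      · exact hT'C hx
    have hindins : LinearIndependent F (fun i : ((insert j₀ T' : Finset (Fin ℓ)) : Set (Fin ℓ)) => v i) :=
      hCindep.comp (Set.inclusion hins) (Set.inclusion_injective hins)
    rw [Finset.coe_insert] at hindins
    have := ((linearIndepOn_insert (f := v) (by simpa using hj₀T')).1 hindins).2
    apply this
    rw [hvj₀]
    exact Submodule.sum_mem _ (fun i hi =>
      Submodule.smul_mem _ _ (Submodule.subset_span ⟨i, hi, rfl⟩))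
  -- Step 8: build the permutation from sorted lists
  obtain ⟨L1, hL1def⟩ : ∃ l : List (Fin ℓ), l = T'.sort (· ≤ ·) := ⟨_, rfl⟩
  obtain ⟨L3, hL3def⟩ : ∃ l : List (Fin ℓ), l = (C \ T').sort (· ≤ ·) := ⟨_, rfl⟩
  obtain ⟨L, hLdef⟩ : ∃ l : List (Fin ℓ), l = L1 ++ j₀ :: L3 := ⟨_, rfl⟩
  have hL1len : L1.length = s := by rw [hL1def]; exact Finset.length_sort _
  have hL3len : L3.length = r - s := by
    rw [hL3def, Finset.length_sort, Finset.card_sdiff_of_subset hT'C, hCcard]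
  have hLlen : L.length = r + 1 := by
    rw [hLdef, List.length_append, List.length_cons, hL1len, hL3len]; omega
  have hL1mem : ∀ x ∈ L1, x ∈ T' := fun x hx => (Finset.mem_sort _).1 (hL1def ▸ hx)
  have hL3mem : ∀ x ∈ L3, x ∈ C \ T' := fun x hx => (Finset.mem_sort _).1 (hL3def ▸ hx)
  have hLnodup : L.Nodup := by
    rw [hLdef, List.nodup_append]
    refine ⟨hL1def ▸ Finset.sort_nodup _ _, ?_, ?_⟩
    · rw [List.nodup_cons]
      refine ⟨fun hj => ?_, hL3def ▸ Finset.sort_nodup _ _⟩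
      exact hj₀C (Finset.mem_sdiff.1 (hL3mem _ hj)).1
    · intro x hx y hx' hxy
      rw [← hxy] at hx'
      have hxT' := hL1mem x hx
      rcases List.mem_cons.1 hx' with hx2 | hx2
      · exact hj₀T' (hx2 ▸ hxT')
      · exact (Finset.mem_sdiff.1 (hL3mem x hx2)).2 hxT'
  obtain ⟨L2, hL2def⟩ : ∃ l : List (Fin ℓ),
      l = L ++ (Finset.univ \ L.toFinset).sort (· ≤ ·) := ⟨_, rfl⟩
  have hL2len : L2.length = ℓ := by
    rw [hL2def, List.length_append, Finset.length_sort, Finset.card_sdiff_of_subset (Finset.subset_univ _),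
      List.toFinset_card_of_nodup hLnodup, hLlen, Finset.card_univ, Fintype.card_fin]
    omega
  have hL2nodup : L2.Nodup := by
    rw [hL2def, List.nodup_append]
    refine ⟨hLnodup, Finset.sort_nodup _ _, ?_⟩
    intro x hx y hx' hxy
    rw [← hxy] at hx'
    have := (Finset.mem_sdiff.1 ((Finset.mem_sort _).1 hx')).2
    exact this (List.mem_toFinset.2 hx)
  have hL2L : ∀ (i : ℕ) (hi : i < r + 1),
      L2[i]'(by omega) = L[i]'(by omega) := by
    intro i hi
    simp only [hL2def]
    exact List.getElem_append_left (by omega)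
  obtain ⟨σ, hσap⟩ : ∃ σ : Equiv.Perm (Fin ℓ),
      ∀ i : Fin ℓ, σ i = L2[i.1]'(by rw [hL2len]; exact i.2) := by
    have hfinj : Function.Injective
        (fun i : Fin ℓ => L2[i.1]'(by rw [hL2len]; exact i.2)) := by
      intro a b hab
      have h2 := List.nodup_iff_injective_get.1 hL2nodup
        (a₁ := ⟨a.1, by rw [hL2len]; exact a.2⟩) (a₂ := ⟨b.1, by rw [hL2len]; exact b.2⟩)
        (by simpa [List.get_eq_getElem] using hab)
      exact Fin.ext (by simpa using congrArg Fin.val h2)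
    exact ⟨Equiv.ofBijective _ (Finite.injective_iff_bijective.1 hfinj), fun i => rfl⟩
  have hσL : ∀ (i : ℕ) (hi : i < r + 1), σ ⟨i, by omega⟩ = L[i]'(by omega) := by
    intro i hi
    rw [hσap ⟨i, by omega⟩]
    exact hL2L i hi
  have hσT' : ∀ (i : ℕ) (hi : i < s), σ ⟨i, by omega⟩ ∈ T' := by
    intro i hi
    rw [hσL i (by omega)]
    have heq : L[i]'(by omega) = L1[i]'(by omega) := by
      simp only [hLdef]
      exact List.getElem_append_left (by omega)
    rw [heq]
    exact hL1mem _ (List.getElem_mem _)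
  have hσs : σ ⟨s, by omega⟩ = j₀ := by
    rw [hσL s (by omega)]
    have heq : L[s]'(by omega) = j₀ := by
      simp only [hLdef]
      rw [List.getElem_append_right (by omega)]
      simp [hL1len]
    exact heq
  have hσC : ∀ (i : ℕ) (hi : i < r + 1), i ≠ s → σ ⟨i, by omega⟩ ∈ C := by
    intro i hi hne
    by_cases hlt : i < s
    · exact hT'C (hσT' i hlt)
    · have hgt : s < i := by omega
      rw [hσL i hi]
      have heq : L[i]'(by omega) = L3[i - s - 1]'(by omega) := by
        have e1 : L[i]'(by omega) =
            (j₀ :: L3)[i - L1.length]'(by simp only [List.length_cons]; omega) := by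
          simp only [hLdef]
          exact List.getElem_append_right (by omega)
        have e2 : (j₀ :: L3)[i - L1.length]'(by simp only [List.length_cons]; omega) =
            (j₀ :: L3)[(i - s - 1) + 1]'(by simp only [List.length_cons]; omega) :=
          getElem_idx_congr _ (by omega) _
        have e3 : (j₀ :: L3)[(i - s - 1) + 1]'(by simp only [List.length_cons]; omega) =
            L3[i - s - 1]'(by omega) := List.getElem_cons_succ ..
        exact e1.trans (e2.trans e3)
      rw [heq]
      exact (Finset.mem_sdiff.1 (hL3mem _ (List.getElem_mem _))).1
  -- Step 9: assemble everything
  have hsℓ : s ≤ ℓ := by omega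
  refine ⟨σ, s, hsr, fun i => cc (σ (Fin.castLE hsℓ i)), ?_, ?_, ?_⟩
  · intro i
    exact hccne _ (hσT' i.1 i.2)
  · have hφmem : ∀ i : {i : Fin (r + 1) // (i : ℕ) ≠ s},
        σ (Fin.castLE hrℓ i.1) ∈ (C : Set (Fin ℓ)) := by
      intro i
      exact hσC i.1.1 i.1.2 i.2
    have hφinj : Function.Injective
        (fun i : {i : Fin (r + 1) // (i : ℕ) ≠ s} =>
          (⟨σ (Fin.castLE hrℓ i.1), hφmem i⟩ : (C : Set (Fin ℓ)))) := by
      intro a b hab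
      have h1 := σ.injective (congrArg Subtype.val hab)
      exact Subtype.ext (Fin.castLE_injective _ h1)
    exact hCindep.comp _ hφinj
  · have heinj : Function.Injective (fun i : Fin s => σ (Fin.castLE hsℓ i)) := by
      intro a b hab
      exact Fin.castLE_injective _ (σ.injective hab)
    have himgsub : Finset.univ.image (fun i : Fin s => σ (Fin.castLE hsℓ i)) ⊆ T' := by
      intro x hx
      obtain ⟨i, _, rfl⟩ := Finset.mem_image.1 hx
      exact hσT' i.1 i.2
    have himg : Finset.univ.image (fun i : Fin s => σ (Fin.castLE hsℓ i)) = T' := by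
      apply Finset.eq_of_subset_of_card_le himgsub
      rw [Finset.card_image_of_injective _ heinj, Finset.card_univ, Fintype.card_fin]
    have hsum : v j₀ = ∑ i : Fin s,
        cc (σ (Fin.castLE hsℓ i)) • v (σ (Fin.castLE hsℓ i)) := by
      rw [hvj₀, ← himg, Finset.sum_image (fun a _ b _ h => heinj h)]
    have hj : σ ⟨s, by omega⟩ = j₀ := hσs
    rw [hj]
    exact hsum
end
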